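/- Let G(T) be a connected threshold graph on {1,…,n} (n ≥ 2) with construction sequence T and Laplacian matrix L. Let W ⊆ {1,…,n} be a set containing exactly one vertex of each distinct degree value (i.e., for every value δ in {d(1),…,d(n)} there is exactly one w ∈ W with d(w) = δ), and let S = {1,…,n} \ W be the set of control nodes. Then for every real number λ and every nonzero vector v ∈ ℝ^n with L·v = λ·v, there exists j ∈ S with v_j ≠ 0. (By the PBH test, the Laplacian network with control nodes S is controllable.) -/

import Mathlib

open Finset Matrix Polynomial

/-- The threshold graph on `Fin n` (vertex `i` of the paper corresponds to `⟨i-1, _⟩ : Fin n`)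
with construction sequence `T` : two distinct vertices are adjacent iff the later one
(in the construction order) was added by a join operation. -/
def thresholdGraph (n : ℕ) (T : Fin n → Bool) : SimpleGraph (Fin n) where
  Adj i j := i ≠ j ∧ T (max i j) = true
  symm := by
    refine ⟨fun i j h => ?_⟩
    exact ⟨h.1.symm, by rw [max_comm]; exact h.2⟩
  loopless := by
    refine ⟨fun i h => ?_⟩
    exact h.1 rfl

instance thresholdGraph.instDecidableRelAdj (n : ℕ) (T : Fin n → Bool) :
    DecidableRel (thresholdGraph n T).Adj :=
  fun i j => decidable_of_iff (i ≠ j ∧ T (max i j) = true) Iff.rfl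

/-!
If `v` vanishes off `W`, no two vertices in the support of `v` have the same degree, and this
alone forces an eigenvector `v` to vanish. For the eigenvalue `0`, `v` is constant on the
non-isolated vertices, which in a threshold graph all lie in one component; among them two
share a degree (pigeonhole on degrees `1, …, m - 1`), so one is outside the support and `v`
vanishes there. If moreover `∑ v = 0`, then `v = 0`, since the isolated vertices all have
degree `0` and so at most one of them carries weight.
For a nonzero eigenvalue `∑ v = 0`, and we induct on `n`. The complement of `G(T)` is `G(!T)`,
and on vectors with zero sum its Laplacian is `n - L`; so we may assume the last vertex is
isolated. Then `λ v_last = 0`, and deleting that vertex leaves an eigenvector of a smaller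
threshold graph.
-/

namespace SimpleGraph

variable {V : Type*} [Fintype V] [DecidableEq V] (G : SimpleGraph V) [DecidableRel G.Adj]

theorem sum_lapMatrix_mulVec {R : Type*} [CommRing R] (v : V → R) :
    ∑ i, (G.lapMatrix R *ᵥ v) i = 0 := by
  have h : (fun _ ↦ (1 : R)) ᵥ* G.lapMatrix R = 0 := by
    rw [← mulVec_transpose, (G.isSymm_lapMatrix R).eq, lapMatrix_mulVec_const_eq_zero]
  simpa [dotProduct, h] using dotProduct_mulVec (fun _ ↦ (1 : R)) (G.lapMatrix R) v

theorem exists_ne_degree_eq_of_degree_pos {i : V} (hi : 0 < G.degree i) :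
    ∃ a b, a ≠ b ∧ 0 < G.degree a ∧ 0 < G.degree b ∧ G.degree a = G.degree b := by
  set M := ({a | 0 < G.degree a} : Finset V)
  have hmaps : ∀ a ∈ M, G.degree a ∈ Icc 1 (#M - 1) := by
    intro a ha
    have hsub : G.neighborFinset a ⊆ M.erase a := fun k hk ↦ by
      rw [mem_neighborFinset] at hk
      simpa [M, hk.ne'] using G.degree_pos_iff_exists_adj k |>.2 ⟨a, hk.symm⟩
    have := card_le_card hsub
    rw [card_erase_of_mem ha, card_neighborFinset_eq_degree] at this
    exact mem_Icc.2 ⟨(mem_filter.1 ha).2, this⟩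
  have hlt : #(Icc 1 (#M - 1)) < #M := by
    have : 0 < #M := card_pos.2 ⟨i, by simpa [M] using hi⟩
    rw [Nat.card_Icc]
    omega
  obtain ⟨a, ha, b, hb, hab, hdeg⟩ := exists_ne_map_eq_of_card_lt_of_maps_to hlt hmaps
  exact ⟨a, b, hab, (mem_filter.1 ha).2, (mem_filter.1 hb).2, hdeg⟩

end SimpleGraph

namespace thresholdGraph

variable {n : ℕ} {T : Fin n → Bool}

theorem adj_iff {i j : Fin n} : (thresholdGraph n T).Adj i j ↔ i ≠ j ∧ T (max i j) = true :=
  Iff.rfl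

theorem reachable_of_lt_of_degree_pos {i j : Fin n} (hij : i < j)
    (hj : 0 < (thresholdGraph n T).degree j) : (thresholdGraph n T).Reachable i j := by
  obtain ⟨k, hjk, hT⟩ := (thresholdGraph n T).degree_pos_iff_exists_adj j |>.1 hj
  rcases le_total k j with hkj | hjk'
  · rw [max_eq_left hkj] at hT
    exact SimpleGraph.Adj.reachable (adj_iff.2 ⟨hij.ne, by rwa [max_eq_right hij.le]⟩)
  · rw [max_eq_right hjk'] at hT
    have hik : (thresholdGraph n T).Adj i k :=
      adj_iff.2 ⟨(hij.trans_le hjk').ne, by rwa [max_eq_right (hij.le.trans hjk')]⟩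
    have hjk : (thresholdGraph n T).Adj j k := adj_iff.2 ⟨hjk, by rwa [max_eq_right hjk']⟩
    exact hik.reachable.trans hjk.reachable.symm

theorem reachable_of_degree_pos {i j : Fin n} (hi : 0 < (thresholdGraph n T).degree i)
    (hj : 0 < (thresholdGraph n T).degree j) : (thresholdGraph n T).Reachable i j := by
  rcases lt_trichotomy i j with h | rfl | h
  · exact reachable_of_lt_of_degree_pos h hj
  · rfl
  · exact (reachable_of_lt_of_degree_pos h hi).symm

theorem lapMatrix_mulVec_apply (v : Fin n → ℝ) (i : Fin n) :
    ((thresholdGraph n T).lapMatrix ℝ *ᵥ v) i = ∑ j, if T (max i j) then v i - v j else 0 := by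
  rw [SimpleGraph.lapMatrix_mulVec_apply, (thresholdGraph n T).degree_eq_sum_if_adj (R := ℝ),
    SimpleGraph.neighborFinset_eq_filter, sum_filter, sum_mul, ← sum_sub_distrib]
  refine sum_congr rfl fun j _ ↦ ?_
  by_cases hij : i = j
  · simp [hij]
  · by_cases hT : T (max i j) <;> simp [adj_iff, hij, hT]

theorem degree_add_degree_not (i : Fin n) :
    (thresholdGraph n T).degree i + (thresholdGraph n (fun k ↦ !T k)).degree i = n - 1 := by
  have h := (thresholdGraph n T).degree_eq_sum_if_adj (R := ℕ) i
  have h' := (thresholdGraph n (fun k ↦ !T k)).degree_eq_sum_if_adj (R := ℕ) i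
  rw [Nat.cast_id] at h h'
  rw [h, h', ← sum_add_distrib, ← sum_erase_add _ _ (mem_univ i),
    sum_congr rfl (g := fun _ ↦ 1) fun j hj ↦ ?_]
  · simp
  · cases hT : T (max i j) <;> simp [adj_iff, (ne_of_mem_erase hj).symm, hT]

theorem lapMatrix_mulVec_add_not (v : Fin n → ℝ) (i : Fin n) :
    ((thresholdGraph n T).lapMatrix ℝ *ᵥ v) i
      + ((thresholdGraph n (fun k ↦ !T k)).lapMatrix ℝ *ᵥ v) i = n * v i - ∑ j, v j := by
  rw [lapMatrix_mulVec_apply, lapMatrix_mulVec_apply, ← sum_add_distrib,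
    sum_congr rfl (g := fun j ↦ v i - v j) fun j _ ↦ by cases T (max i j) <;> simp]
  simp [sum_sub_distrib]

theorem lapMatrix_mulVec_last {T : Fin (n + 1) → Bool} (hT : T (Fin.last n) = false)
    (v : Fin (n + 1) → ℝ) : ((thresholdGraph (n + 1) T).lapMatrix ℝ *ᵥ v) (Fin.last n) = 0 := by
  simp [lapMatrix_mulVec_apply, max_eq_left (Fin.le_last _), hT]

theorem lapMatrix_mulVec_castSucc {T : Fin (n + 1) → Bool} (hT : T (Fin.last n) = false)
    (v : Fin (n + 1) → ℝ) (i : Fin n) :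
    ((thresholdGraph (n + 1) T).lapMatrix ℝ *ᵥ v) i.castSucc
      = ((thresholdGraph n (T ∘ Fin.castSucc)).lapMatrix ℝ *ᵥ (v ∘ Fin.castSucc)) i := by
  simp [lapMatrix_mulVec_apply, Fin.sum_univ_castSucc, max_eq_right (Fin.le_last _), hT,
    Fin.strictMono_castSucc.monotone.map_max]

theorem degree_castSucc {T : Fin (n + 1) → Bool} (hT : T (Fin.last n) = false) (i : Fin n) :
    (thresholdGraph (n + 1) T).degree i.castSucc
      = (thresholdGraph n (T ∘ Fin.castSucc)).degree i := by
  have h := (thresholdGraph (n + 1) T).degree_eq_sum_if_adj (R := ℕ) i.castSucc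
  have h' := (thresholdGraph n (T ∘ Fin.castSucc)).degree_eq_sum_if_adj (R := ℕ) i
  rw [Nat.cast_id] at h h'
  rw [h, h', Fin.sum_univ_castSucc]
  simp [adj_iff, max_eq_right (Fin.le_last _), hT, Fin.strictMono_castSucc.monotone.map_max]

theorem apply_eq_zero_of_lapMatrix_mulVec_eq_zero {v : Fin n → ℝ}
    (hv : (thresholdGraph n T).lapMatrix ℝ *ᵥ v = 0)
    (hinj : Set.InjOn ((thresholdGraph n T).degree ·) (Function.support v)) {i : Fin n}
    (hi : 0 < (thresholdGraph n T).degree i) : v i = 0 := by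
  have hconst := SimpleGraph.lapMatrix_mulVec_eq_zero_iff_forall_reachable _ |>.1 hv
  obtain ⟨a, b, hab, ha, hb, hdeg⟩ := (thresholdGraph n T).exists_ne_degree_eq_of_degree_pos hi
  have hvab : v a = 0 ∨ v b = 0 := by
    by_contra! h
    exact hab (hinj h.1 h.2 hdeg)
  rcases hvab with h | h
  · rw [hconst i a (reachable_of_degree_pos hi ha), h]
  · rw [hconst i b (reachable_of_degree_pos hi hb), h]

theorem eq_zero_of_lapMatrix_mulVec_eq_zero {v : Fin n → ℝ}
    (hv : (thresholdGraph n T).lapMatrix ℝ *ᵥ v = 0)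
    (hinj : Set.InjOn ((thresholdGraph n T).degree ·) (Function.support v))
    (hsum : ∑ i, v i = 0) : v = 0 := by
  by_contra! hne
  obtain ⟨i, hi⟩ := Function.ne_iff.1 hne
  have hdeg : ∀ j, v j ≠ 0 → (thresholdGraph n T).degree j = 0 := fun j hj ↦
    Nat.eq_zero_of_not_pos fun hpos ↦ hj (apply_eq_zero_of_lapMatrix_mulVec_eq_zero hv hinj hpos)
  have hsingle : ∀ j, j ≠ i → v j = 0 := fun j hji ↦ by
    by_contra hj
    exact hji (hinj hj hi ((hdeg j hj).trans (hdeg i hi).symm))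
  rw [sum_eq_single i (fun j _ ↦ hsingle j) (by simp)] at hsum
  exact hi hsum

theorem lapMatrix_mulVec_not {μ : ℝ} {v : Fin n → ℝ}
    (hv : (thresholdGraph n T).lapMatrix ℝ *ᵥ v = μ • v) (hsum : ∑ i, v i = 0) :
    (thresholdGraph n (fun k ↦ !T k)).lapMatrix ℝ *ᵥ v = ((n : ℝ) - μ) • v := by
  funext i
  have h := lapMatrix_mulVec_add_not (T := T) v i
  rw [hv, hsum] at h
  simp only [Pi.smul_apply, smul_eq_mul] at h ⊢
  linear_combination h

theorem injOn_degree_not {s : Set (Fin n)} (h : Set.InjOn ((thresholdGraph n T).degree ·) s) :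
    Set.InjOn ((thresholdGraph n (fun k ↦ !T k)).degree ·) s := fun a ha b hb hab ↦
  h ha hb <| by
    have ha' := degree_add_degree_not (T := T) a
    have hb' := degree_add_degree_not (T := T) b
    dsimp only at hab ⊢
    omega

theorem eq_zero_of_lapMatrix_mulVec_eq_smul {μ : ℝ} {v : Fin n → ℝ}
    (hv : (thresholdGraph n T).lapMatrix ℝ *ᵥ v = μ • v)
    (hinj : Set.InjOn ((thresholdGraph n T).degree ·) (Function.support v))
    (hsum : ∑ i, v i = 0) : v = 0 := by
  induction n generalizing μ with
  | zero => exact Subsingleton.elim _ _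
  | succ n ih =>
    suffices key : ∀ (T : Fin (n + 1) → Bool) (μ : ℝ), T (Fin.last n) = false →
        (thresholdGraph (n + 1) T).lapMatrix ℝ *ᵥ v = μ • v →
        Set.InjOn ((thresholdGraph (n + 1) T).degree ·) (Function.support v) → v = 0 by
      cases hT : T (Fin.last n)
      · exact key T μ hT hv hinj
      · exact key _ _ (by simp [hT]) (lapMatrix_mulVec_not hv hsum) (injOn_degree_not hinj)
    intro T μ hT hv hinj
    by_cases hμ : μ = 0
    · exact eq_zero_of_lapMatrix_mulVec_eq_zero (by simpa [hμ] using hv) hinj hsum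
    have hlast : v (Fin.last n) = 0 := by
      simpa [lapMatrix_mulVec_last hT, hμ] using (congrFun hv (Fin.last n)).symm
    have hrest : v ∘ Fin.castSucc = 0 := by
      refine ih (T := T ∘ Fin.castSucc) (μ := μ) ?_ ?_ ?_
      · funext i
        simpa [lapMatrix_mulVec_castSucc hT] using congrFun hv i.castSucc
      · intro a ha b hb hab
        exact Fin.castSucc_injective _ <| hinj ha hb <| by simpa [degree_castSucc hT] using hab
      · simpa [Fin.sum_univ_castSucc, hlast] using hsum
    funext i
    induction i using Fin.lastCases with
    | last => exact hlast
    | cast i => exact congrFun hrest i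

end thresholdGraph

theorem thresholdGraph_controllable_from_complement_general (n : ℕ) (T : Fin n → Bool) (hn : 2 ≤ n)
    (hconn : (thresholdGraph n T).Connected)
    (W : Finset (Fin n))
    (hW : ∀ i : Fin n, ∃! w : Fin n, w ∈ W ∧
      (thresholdGraph n T).degree w = (thresholdGraph n T).degree i)
    (lam : ℝ) (v : Fin n → ℝ) (hv0 : v ≠ 0)
    (hv : (thresholdGraph n T).lapMatrix ℝ *ᵥ v = lam • v) :
    ∃ j : Fin n, j ∉ W ∧ v j ≠ 0 := by
  by_contra! hvW
  have hinj : Set.InjOn ((thresholdGraph n T).degree ·) (Function.support v) := by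
    intro a ha b hb hab
    obtain ⟨w, -, hw⟩ := hW b
    exact (hw a ⟨not_imp_comm.1 (hvW a) ha, hab⟩).trans
      (hw b ⟨not_imp_comm.1 (hvW b) hb, rfl⟩).symm
  refine hv0 ?_
  by_cases hlam : lam = 0
  · have : Nontrivial (Fin n) := Fin.nontrivial_iff_two_le.2 hn
    funext i
    exact thresholdGraph.apply_eq_zero_of_lapMatrix_mulVec_eq_zero (by simpa [hlam] using hv) hinj
      (hconn.preconnected.degree_pos_of_nontrivial i)
  · have hsum : lam * ∑ i, v i = 0 := by
      simpa [hv, mul_sum] using (thresholdGraph n T).sum_lapMatrix_mulVec v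
    exact thresholdGraph.eq_zero_of_lapMatrix_mulVec_eq_smul hv hinj
      ((mul_eq_zero.1 hsum).resolve_left hlam)

/-- let `W` contain exactly one vertex of each distinct degree value of a
connected threshold graph and let the control set be `S = V \ W`. Then every nonzero
eigenvector of the Laplacian is nonzero at some control node, i.e. (by the PBH test) the
Laplacian network controlled from `S` is controllable. -/
theorem thresholdGraph_controllable_from_complement (n : ℕ) (T : Fin n → Bool) (hn : 2 ≤ n)
    (hT1 : T ⟨0, lt_of_lt_of_le two_pos hn⟩ = false)
    (hconn : (thresholdGraph n T).Connected)
    (W : Finset (Fin n))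
    (hW : ∀ i : Fin n, ∃! w : Fin n, w ∈ W ∧
      (thresholdGraph n T).degree w = (thresholdGraph n T).degree i)
    (lam : ℝ) (v : Fin n → ℝ) (hv0 : v ≠ 0)
    (hv : (thresholdGraph n T).lapMatrix ℝ *ᵥ v = lam • v) :
    ∃ j : Fin n, j ∉ W ∧ v j ≠ 0 :=
  thresholdGraph_controllable_from_complement_general n T hn hconn W hW lam v hv0 hv
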